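/- arXiv:1610.05466 — 2 statements merged into one kernel-verified Lean document; each statement's English description precedes it below -/
import Mathlib

section
/- A connected simple graph G is a partial cube if and only if it can be obtained from the one-vertex graph K_1 by a finite sequence of expansions. -/
open SimpleGraph

/-- The hypercube graph `Q_d` on `{0,1}^d`: two vertices are adjacent iff they
differ in exactly one coordinate. -/
def hypercubeGraph (d : ℕ) : SimpleGraph (Fin d → Bool) where
  Adj x y := hammingDist x y = 1
  symm := by
    constructor
    intro x y h
    rwa [hammingDist_comm]
  loopless := by
    constructor
    intro x h
    simp [hammingDist_self] at h

/-- A partial cube: a connected simple graph admitting an isometric embedding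
into some hypercube. -/
def IsPartialCube {V : Type} (G : SimpleGraph V) : Prop :=
  G.Connected ∧
    ∃ (d : ℕ) (φ : V → (Fin d → Bool)), Function.Injective φ ∧
      ∀ v w : V, (hypercubeGraph d).dist (φ v) (φ w) = G.dist v w

/-- A subgraph is isometric if distances within it coincide with distances in
the ambient graph. -/
def IsIsometricSubgraph {V : Type} {G : SimpleGraph V} (G' : G.Subgraph) : Prop :=
  ∀ u v : G'.verts, G'.coe.dist u v = G.dist u.val v.val

/-- The expansion graph of `G` with respect to two subgraphs `G₁, G₂`: take
disjoint copies of `G₁` and `G₂` and join the two copies of each vertex of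
`G₁ ∩ G₂` by a matching edge. -/
def expansionGraph {V : Type} {G : SimpleGraph V} (G₁ G₂ : G.Subgraph) :
    SimpleGraph (↥G₁.verts ⊕ ↥G₂.verts) where
  Adj a b :=
    match a, b with
    | Sum.inl u, Sum.inl v => G₁.Adj u v
    | Sum.inr u, Sum.inr v => G₂.Adj u v
    | Sum.inl u, Sum.inr v => (u : V) = (v : V)
    | Sum.inr u, Sum.inl v => (u : V) = (v : V)
  symm := by
    constructor
    rintro (u | u) (v | v) h
    · exact G₁.symm.symm _ _ h
    · exact h.symm
    · exact h.symm
    · exact G₂.symm.symm _ _ h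
  loopless := by
    constructor
    rintro (u | u) h
    · exact G.loopless.irrefl _ (G₁.adj_sub h)
    · exact G.loopless.irrefl _ (G₂.adj_sub h)

/-- `H` is the expansion of `G` with respect to the subgraphs `G₁` and `G₂`:
they are isometric, cover `G` (vertices and edges), have non-empty
intersection, and `H` is isomorphic to the resulting expansion graph. -/
structure IsExpansionWrt {V W : Type} (H : SimpleGraph W) (G : SimpleGraph V)
    (G₁ G₂ : G.Subgraph) : Prop where
  isometric₁ : IsIsometricSubgraph G₁
  isometric₂ : IsIsometricSubgraph G₂
  covers : G₁ ⊔ G₂ = ⊤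
  inter_nonempty : (G₁.verts ∩ G₂.verts).Nonempty
  iso : Nonempty (H ≃g expansionGraph G₁ G₂)

/-- `H` is an expansion of `G` (with respect to some admissible pair of
subgraphs). -/
def IsExpansionOf {V W : Type} (H : SimpleGraph W) (G : SimpleGraph V) : Prop :=
  ∃ G₁ G₂ : G.Subgraph, IsExpansionWrt H G G₁ G₂

/-- Graphs obtainable from the one-vertex graph `K₁` by a finite sequence of
expansions. -/
inductive ObtainableByExpansions : ∀ {V : Type}, SimpleGraph V → Prop
  | single {V : Type} (G : SimpleGraph V) (h : ∃ v : V, ∀ w : V, w = v) :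
      ObtainableByExpansions G
  | expand {V W : Type} {G : SimpleGraph V} {H : SimpleGraph W}
      (hG : ObtainableByExpansions G) (hH : IsExpansionOf H G) :
      ObtainableByExpansions H

/-!
A partial cube is a connected graph with a map `φ : V → (Fin d → Bool)` such that
`G.dist u v = hammingDist (φ u) (φ v)`. Such a map is recognised locally: it suffices that edges
change at most one coordinate and that from every vertex some edge leads strictly closer, in
Hamming distance, to any other vertex.

Appending a coordinate that records the copy turns such a map for `G` into one for an expansion
of `G`; the local criterion holds because the two copies are isometric and cover `G`.
Conversely, let the last coordinate of `φ : V → (Fin (d + 1) → Bool)` be non-constant. Along a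
geodesic only coordinates separating the endpoints flip, so the image of `G` under forgetting
the last coordinate, induced in `Q_d`, is again isometric, as are the images of the two halves
`{v | φ v (Fin.last d) = b}`. These images cover it, meet in the images of the edges flipping
the last coordinate, and `G` is the expansion along them. Induction on `d` concludes.
-/

section Hamming

variable {ι : Type*} [Fintype ι] [DecidableEq ι] {β : ι → Type*} [∀ i, DecidableEq (β i)]

theorem hammingDist_update_left_add (x y : ∀ i, β i) (j : ι) (b : β j) :
    hammingDist (Function.update x j b) y + (if x j = y j then 0 else 1) =
      hammingDist x y + (if b = y j then 0 else 1) := by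
  simp only [hammingDist, Finset.card_filter]
  rw [← Finset.add_sum_erase _ _ (Finset.mem_univ j),
    ← Finset.add_sum_erase _ _ (Finset.mem_univ j),
    Finset.sum_congr rfl fun i hi => by rw [Function.update_of_ne (Finset.ne_of_mem_erase hi)]]
  simp only [Function.update_self]
  split_ifs <;> simp_all <;> omega

theorem hammingDist_update_left_of_ne {x y : ∀ i, β i} {j : ι} (h : x j ≠ y j) :
    hammingDist (Function.update x j (y j)) y + 1 = hammingDist x y := by
  simpa [h] using hammingDist_update_left_add x y j (y j)

theorem hammingDist_update_right_of_ne {x : ∀ i, β i} {j : ι} {b : β j} (h : b ≠ x j) :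
    hammingDist x (Function.update x j b) = 1 := by
  simpa [h, hammingDist_comm] using hammingDist_update_left_add x x j b

theorem hammingDist_eq_one_iff {x y : ∀ i, β i} :
    hammingDist x y = 1 ↔ ∃ j b, b ≠ x j ∧ y = Function.update x j b := by
  refine ⟨fun h => ?_, fun ⟨j, b, hb, hy⟩ => hy ▸ hammingDist_update_right_of_ne hb⟩
  obtain ⟨j, hj⟩ := Finset.card_eq_one.mp h
  have hmem : ∀ i, x i ≠ y i ↔ i = j := fun i => by simpa using Finset.ext_iff.mp hj i
  refine ⟨j, y j, ((hmem j).mpr rfl).symm, funext fun i => ?_⟩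
  rcases eq_or_ne i j with rfl | hi
  · simp
  · rw [Function.update_of_ne hi]
    by_contra hne
    exact hi ((hmem i).mp (Ne.symm hne))

end Hamming

section Fin

variable {n : ℕ} {β : Type*} [DecidableEq β]

theorem hammingDist_eq_hammingDist_init_add (x y : Fin (n + 1) → β) :
    hammingDist x y = hammingDist (Fin.init x) (Fin.init y) +
      if x (Fin.last n) = y (Fin.last n) then 0 else 1 := by
  unfold hammingDist Fin.init
  rw [Finset.card_filter, Finset.card_filter, Fin.sum_univ_castSucc]
  split_ifs <;> simp_all

theorem hammingDist_snoc (x y : Fin n → β) (b c : β) :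
    hammingDist (Fin.snoc x b : Fin (n + 1) → β) (Fin.snoc y c) =
      hammingDist x y + if b = c then 0 else 1 := by
  simp [hammingDist_eq_hammingDist_init_add, Fin.init_snoc]

theorem hammingDist_init_update_castSucc {x y : Fin (n + 1) → β} {i : Fin n}
    (h : x i.castSucc ≠ y i.castSucc) :
    hammingDist (Fin.init x) (Fin.init (Function.update x i.castSucc (y i.castSucc))) = 1 ∧
      hammingDist (Fin.init (Function.update x i.castSucc (y i.castSucc))) (Fin.init y) + 1 =
        hammingDist (Fin.init x) (Fin.init y) := by
  rw [Fin.init_update_castSucc]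
  exact ⟨hammingDist_update_right_of_ne (Ne.symm h),
    hammingDist_update_left_of_ne (x := Fin.init x) (y := Fin.init y) h⟩

end Fin

namespace SimpleGraph

variable {W : Type*} {H : SimpleGraph W}

theorem exists_adj_dist_add_one_eq {u v : W} (h : H.dist u v ≠ 0) :
    ∃ w, H.Adj u w ∧ H.dist w v + 1 = H.dist u v := by
  obtain ⟨p, hp⟩ := (Reachable.of_dist_ne_zero h).exists_walk_length_eq_dist
  cases p with
  | nil => exact absurd dist_self h
  | cons hadj q =>
    obtain ⟨r, hr⟩ := q.reachable.exists_walk_length_eq_dist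
    refine ⟨_, hadj, le_antisymm ?_ ?_⟩
    · simpa [← hp] using dist_le q
    · simpa [hr] using dist_le (r.cons hadj)

variable {ι : Type*} [Fintype ι] {β : ι → Type*} [∀ i, DecidableEq (β i)]

variable (H) in
def IsHammingIsometry (f : W → ∀ i, β i) : Prop :=
  ∀ a b, H.dist a b = hammingDist (f a) (f b)

theorem IsHammingIsometry.injective {f : W → ∀ i, β i} (hf : H.IsHammingIsometry f)
    (hconn : H.Connected) : Function.Injective f := fun a b hab =>
  hconn.dist_eq_zero_iff.mp (by rw [hf, hab, hammingDist_self])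

section Criterion

variable (f : W → ∀ i, β i)

theorem hammingDist_le_length (hf : ∀ a b, H.Adj a b → hammingDist (f a) (f b) ≤ 1)
    {a b : W} (p : H.Walk a b) : hammingDist (f a) (f b) ≤ p.length := by
  induction p with
  | nil => simp
  | cons h p ih =>
    simpa [add_comm] using (hammingDist_triangle _ _ _).trans (Nat.add_le_add (hf _ _ h) ih)

theorem exists_walk_length_le_hammingDist
    (hstep : ∀ a b, a ≠ b → ∃ c, H.Adj a c ∧ hammingDist (f c) (f b) < hammingDist (f a) (f b))
    (a b : W) : ∃ p : H.Walk a b, p.length ≤ hammingDist (f a) (f b) := by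
  induction hn : hammingDist (f a) (f b) using Nat.strong_induction_on generalizing a with
  | _ n ih =>
    by_cases hab : a = b
    · subst hab
      exact ⟨.nil, Nat.zero_le _⟩
    obtain ⟨c, hac, hc⟩ := hstep a b hab
    obtain ⟨p, hp⟩ := ih _ (hn ▸ hc) c rfl
    exact ⟨p.cons hac, by rw [Walk.length_cons]; omega⟩

theorem preconnected_and_isHammingIsometry
    (hf : ∀ a b, H.Adj a b → hammingDist (f a) (f b) ≤ 1)
    (hstep : ∀ a b, a ≠ b → ∃ c, H.Adj a c ∧ hammingDist (f c) (f b) < hammingDist (f a) (f b)) :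
    H.Preconnected ∧ H.IsHammingIsometry f := by
  refine ⟨fun a b => ⟨(exists_walk_length_le_hammingDist f hstep a b).choose⟩, fun a b => ?_⟩
  obtain ⟨p, hp⟩ := exists_walk_length_le_hammingDist f hstep a b
  obtain ⟨q, hq⟩ := p.reachable.exists_walk_length_eq_dist
  exact le_antisymm ((dist_le p).trans hp) (hq ▸ hammingDist_le_length f hf q)

end Criterion

theorem IsHammingIsometry.exists_adj_eq_update [DecidableEq ι] {f : W → ∀ i, β i}
    (hf : H.IsHammingIsometry f) (hconn : H.Connected) {u v : W} (huv : u ≠ v) :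
    ∃ w j, H.Adj u w ∧ f u j ≠ f v j ∧ f w = Function.update (f u) j (f v j) := by
  obtain ⟨w, hw, hwv⟩ := exists_adj_dist_add_one_eq (hconn.pos_dist_of_ne huv).ne'
  obtain ⟨j, b, -, hwu⟩ :=
    hammingDist_eq_one_iff.mp ((hf u w).symm.trans (dist_eq_one_iff_adj.mpr hw))
  have key := hammingDist_update_left_add (f u) (f v) j b
  rw [← hwu, ← hf, ← hf, ← hwv] at key
  have hj : f u j ≠ f v j := fun h => by rw [if_pos h] at key; omega
  have hb : b = f v j := by_contra fun h => by simp [h, hj] at key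
  exact ⟨w, j, hw, hj, hb ▸ hwu⟩

theorem IsHammingIsometry.adj_iff {d : ℕ} {f : W → Fin (d + 1) → Bool}
    (hf : H.IsHammingIsometry f) {u v : W} :
    H.Adj u v ↔ if f u (Fin.last d) = f v (Fin.last d) then
      hammingDist (Fin.init (f u)) (Fin.init (f v)) = 1 else Fin.init (f u) = Fin.init (f v) := by
  rw [← dist_eq_one_iff_adj, hf, hammingDist_eq_hammingDist_init_add]
  split_ifs <;> simp

end SimpleGraph

theorem hypercubeGraph_dist {d : ℕ} (x y : Fin d → Bool) :
    (hypercubeGraph d).dist x y = hammingDist x y := by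
  refine (preconnected_and_isHammingIsometry (H := hypercubeGraph d) id
    (fun a b h => Nat.le_of_eq h) fun a b hab => ?_).2 x y
  obtain ⟨j, hj⟩ := Function.ne_iff.mp hab
  exact ⟨Function.update a j (b j), hammingDist_update_right_of_ne (Ne.symm hj),
    Nat.lt_of_succ_le (hammingDist_update_left_of_ne hj).le⟩

theorem isPartialCube_iff {V : Type} {G : SimpleGraph V} :
    IsPartialCube G ↔ G.Connected ∧ ∃ (d : ℕ) (φ : V → Fin d → Bool), G.IsHammingIsometry φ := by
  simp only [IsPartialCube, hypercubeGraph_dist]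
  exact ⟨fun ⟨hconn, d, φ, _, hφ⟩ => ⟨hconn, d, φ, fun u v => (hφ u v).symm⟩,
    fun ⟨hconn, d, φ, hφ⟩ => ⟨hconn, d, φ, hφ.injective hconn, fun u v => (hφ u v).symm⟩⟩

theorem isPartialCube_of_subsingleton {V : Type} [Subsingleton V] [Nonempty V]
    (G : SimpleGraph V) : IsPartialCube G :=
  isPartialCube_iff.mpr ⟨(connected_iff G).mpr ⟨.of_subsingleton, inferInstance⟩, 0,
    fun _ => Fin.elim0, fun u v => by simp [Subsingleton.elim u v]⟩

section Expansion

variable {V : Type} {G : SimpleGraph V} {G₁ G₂ : G.Subgraph}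

theorem IsIsometricSubgraph.exists_adj_dist_add_one_eq (hiso : IsIsometricSubgraph G₁)
    (hconn : G.Connected) {u v : V} (hu : u ∈ G₁.verts) (hv : v ∈ G₁.verts) (huv : u ≠ v) :
    ∃ w, G₁.Adj u w ∧ G.dist w v + 1 = G.dist u v := by
  have hdist := hiso ⟨u, hu⟩ ⟨v, hv⟩
  obtain ⟨w, hw, hwv⟩ := SimpleGraph.exists_adj_dist_add_one_eq (H := G₁.coe)
    (u := ⟨u, hu⟩) (v := ⟨v, hv⟩) (hdist ▸ (hconn.pos_dist_of_ne huv).ne')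
  exact ⟨w, hw, by rwa [hiso, hdist] at hwv⟩

theorem mem_or_exists_adj_dist_add_one_eq (hcov : G₁ ⊔ G₂ = ⊤) (hconn : G.Connected) {u v : V}
    (hv : v ∈ G₂.verts) : u ∈ G₂.verts ∨ ∃ w, G₁.Adj u w ∧ G.dist w v + 1 = G.dist u v := by
  by_cases hu₂ : u ∈ G₂.verts
  · exact .inl hu₂
  obtain ⟨w, hw, hwv⟩ := exists_adj_dist_add_one_eq
    (hconn.pos_dist_of_ne fun huv : u = v => hu₂ (huv ▸ hv)).ne'
  have hw' : (G₁ ⊔ G₂).Adj u w := by rw [hcov]; exact hw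
  rcases Subgraph.sup_adj.mp hw' with h | h
  · exact .inr ⟨w, h, hwv⟩
  · exact absurd h.fst_mem hu₂

variable {d : ℕ}

def expansionEmbedding (φ : V → Fin d → Bool) (a : G₁.verts ⊕ G₂.verts) : Fin (d + 1) → Bool :=
  Fin.snoc (φ (Sum.elim Subtype.val Subtype.val a)) a.isRight

variable {φ : V → Fin d → Bool}

theorem hammingDist_expansionEmbedding (hφ : G.IsHammingIsometry φ)
    (a b : G₁.verts ⊕ G₂.verts) :
    hammingDist (expansionEmbedding φ a) (expansionEmbedding φ b) =
      G.dist (Sum.elim Subtype.val Subtype.val a) (Sum.elim Subtype.val Subtype.val b) +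
        if a.isRight = b.isRight then 0 else 1 := by
  rw [expansionEmbedding, expansionEmbedding, hammingDist_snoc, hφ]

theorem hammingDist_expansionEmbedding_of_adj (hφ : G.IsHammingIsometry φ)
    {a b : G₁.verts ⊕ G₂.verts} (h : (expansionGraph G₁ G₂).Adj a b) :
    hammingDist (expansionEmbedding φ a) (expansionEmbedding φ b) = 1 := by
  rw [hammingDist_expansionEmbedding hφ]
  rcases a with a | a <;> rcases b with b | b
  · simpa using dist_eq_one_iff_adj.mpr (G₁.adj_sub h)
  · simpa using dist_eq_zero_iff_eq_or_not_reachable.mpr (.inl h)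
  · simpa using dist_eq_zero_iff_eq_or_not_reachable.mpr (.inl h)
  · simpa using dist_eq_one_iff_adj.mpr (G₂.adj_sub h)

theorem exists_adj_hammingDist_expansionEmbedding_lt (hφ : G.IsHammingIsometry φ)
    (hconn : G.Connected) (h₁ : IsIsometricSubgraph G₁) (h₂ : IsIsometricSubgraph G₂)
    (hcov : G₁ ⊔ G₂ = ⊤) {a b : G₁.verts ⊕ G₂.verts} (hab : a ≠ b) :
    ∃ c, (expansionGraph G₁ G₂).Adj a c ∧
      hammingDist (expansionEmbedding φ c) (expansionEmbedding φ b) <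
        hammingDist (expansionEmbedding φ a) (expansionEmbedding φ b) := by
  simp only [hammingDist_expansionEmbedding hφ]
  rcases a with ⟨u, hu⟩ | ⟨u, hu⟩ <;> rcases b with ⟨v, hv⟩ | ⟨v, hv⟩
  · obtain ⟨w, hw, hwv⟩ := h₁.exists_adj_dist_add_one_eq hconn hu hv (by simpa using hab)
    exact ⟨.inl ⟨w, hw.snd_mem⟩, hw, by simp; omega⟩
  · rcases mem_or_exists_adj_dist_add_one_eq hcov hconn hv with hu₂ | ⟨w, hw, hwv⟩
    · exact ⟨.inr ⟨u, hu₂⟩, rfl, by simp⟩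
    · exact ⟨.inl ⟨w, hw.snd_mem⟩, hw, by simp; omega⟩
  · rcases mem_or_exists_adj_dist_add_one_eq (sup_comm G₁ G₂ ▸ hcov) hconn hv with
      hu₁ | ⟨w, hw, hwv⟩
    · exact ⟨.inl ⟨u, hu₁⟩, rfl, by simp⟩
    · exact ⟨.inr ⟨w, hw.snd_mem⟩, hw, by simp; omega⟩
  · obtain ⟨w, hw, hwv⟩ := h₂.exists_adj_dist_add_one_eq hconn hu hv (by simpa using hab)
    exact ⟨.inr ⟨w, hw.snd_mem⟩, hw, by simp; omega⟩

theorem IsExpansionWrt.isPartialCube {W : Type} {H : SimpleGraph W}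
    (hexp : IsExpansionWrt H G G₁ G₂) (hG : IsPartialCube G) : IsPartialCube H := by
  obtain ⟨hconn, d, φ, hφ⟩ := isPartialCube_iff.mp hG
  obtain ⟨e⟩ := hexp.iso
  obtain ⟨w, hw₁, -⟩ := hexp.inter_nonempty
  obtain ⟨hpre, hψ⟩ := preconnected_and_isHammingIsometry (H := H)
    (fun a => expansionEmbedding φ (e a))
    (fun a b h => (hammingDist_expansionEmbedding_of_adj hφ (e.map_adj_iff.mpr h)).le)
    fun a b hab => by
      obtain ⟨c, hc, hcb⟩ := exists_adj_hammingDist_expansionEmbedding_lt hφ hconn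
        hexp.isometric₁ hexp.isometric₂ hexp.covers (e.injective.ne hab)
      exact ⟨e.symm c, by simpa using e.symm.map_adj_iff.mpr hc, by simpa using hcb⟩
  exact isPartialCube_iff.mpr
    ⟨(connected_iff H).mpr ⟨hpre, ⟨e.symm (.inl ⟨w, hw₁⟩)⟩⟩, d + 1, _, hψ⟩

end Expansion

theorem ObtainableByExpansions.isPartialCube {V : Type} {G : SimpleGraph V}
    (h : ObtainableByExpansions G) : IsPartialCube G := by
  induction h with
  | single G h =>
    obtain ⟨v, hv⟩ := h
    have : Subsingleton _ := ⟨fun a b => (hv a).trans (hv b).symm⟩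
    have : Nonempty _ := ⟨v⟩
    exact isPartialCube_of_subsingleton G
  | expand _ hH ih =>
    obtain ⟨G₁, G₂, hexp⟩ := hH
    exact hexp.isPartialCube ih

section Contraction

variable {V : Type} {G : SimpleGraph V} {d : ℕ} {φ : V → Fin (d + 1) → Bool}

variable (φ) in
def contraction : SimpleGraph (Set.range fun v => Fin.init (φ v)) :=
  (hypercubeGraph d).induce _

variable (φ) in
def contractionHalf (b : Bool) : (contraction φ).Subgraph :=
  (⊤ : (contraction φ).Subgraph).induce {x | ∃ v, φ v (Fin.last d) = b ∧ Fin.init (φ v) = x}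

theorem exists_hammingDist_init_lt (hφ : G.IsHammingIsometry φ) (hconn : G.Connected)
    (u v : V) (huv : Fin.init (φ u) ≠ Fin.init (φ v)) :
    ∃ w, hammingDist (Fin.init (φ u)) (Fin.init (φ w)) = 1 ∧
      hammingDist (Fin.init (φ w)) (Fin.init (φ v)) <
        hammingDist (Fin.init (φ u)) (Fin.init (φ v)) := by
  -- a geodesic step flipping the last coordinate does not move the projection, so the
  -- induction runs on the distance in `G`
  induction hn : hammingDist (φ u) (φ v) using Nat.strong_induction_on generalizing u with
  | _ n ih =>
    obtain ⟨w, j, -, hj, hw⟩ := hφ.exists_adj_eq_update hconn fun h : u = v => huv (h ▸ rfl)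
    rcases j.eq_castSucc_or_eq_last with ⟨i, rfl⟩ | rfl
    · obtain ⟨hw₁, hw₂⟩ := hw ▸ hammingDist_init_update_castSucc hj
      exact ⟨w, hw₁, by omega⟩
    · have hinit : Fin.init (φ w) = Fin.init (φ u) := by rw [hw, Fin.init_update_last]
      have hlt := hammingDist_update_left_of_ne hj
      rw [← hw, hn] at hlt
      simpa only [hinit] using ih _ (by omega) w (hinit ▸ huv) rfl

theorem contraction_preconnected_and_isHammingIsometry (hφ : G.IsHammingIsometry φ)
    (hconn : G.Connected) :
    (contraction φ).Preconnected ∧ (contraction φ).IsHammingIsometry Subtype.val := by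
  refine preconnected_and_isHammingIsometry _ (fun x y h => Nat.le_of_eq h) ?_
  rintro ⟨_, u, rfl⟩ ⟨_, v, rfl⟩ huv
  obtain ⟨w, hw, hwv⟩ := exists_hammingDist_init_lt hφ hconn u v fun h => huv (Subtype.ext h)
  exact ⟨⟨_, w, rfl⟩, hw, hwv⟩

theorem isIsometricSubgraph_contractionHalf (hφ : G.IsHammingIsometry φ) (hconn : G.Connected)
    (b : Bool) : IsIsometricSubgraph (contractionHalf φ b) := by
  suffices hdist : (contractionHalf φ b).coe.IsHammingIsometry fun x => x.1.1 from
    fun x y => by rw [hdist, (contraction_preconnected_and_isHammingIsometry hφ hconn).2]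
  refine (preconnected_and_isHammingIsometry (H := (contractionHalf φ b).coe) _
    (fun x y h => Nat.le_of_eq h.2.2) ?_).2
  rintro ⟨⟨x, hx⟩, u, hu, hux⟩ ⟨⟨y, hy⟩, v, hv, hvy⟩ huv
  obtain rfl : Fin.init (φ u) = x := hux
  obtain rfl : Fin.init (φ v) = y := hvy
  obtain ⟨w, j, -, hj, hw⟩ := hφ.exists_adj_eq_update hconn fun h : u = v => huv (by subst h; rfl)
  rcases j.eq_castSucc_or_eq_last with ⟨i, rfl⟩ | rfl
  · have hwb : φ w (Fin.last d) = b := by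
      rw [hw, Function.update_of_ne (Fin.castSucc_lt_last i).ne', hu]
    obtain ⟨hw₁, hw₂⟩ := hw ▸ hammingDist_init_update_castSucc hj
    exact ⟨⟨⟨_, w, rfl⟩, w, hwb, rfl⟩, ⟨⟨u, hu, rfl⟩, ⟨w, hwb, rfl⟩, hw₁⟩,
      show hammingDist (Fin.init (φ w)) (Fin.init (φ v)) <
        hammingDist (Fin.init (φ u)) (Fin.init (φ v)) by omega⟩
  · exact absurd (hu.trans hv.symm) hj

theorem exists_contractionHalf_of_adj (hφ : G.IsHammingIsometry φ) (hconn : G.Connected)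
    {x y : Set.range fun v => Fin.init (φ v)} (hxy : (contraction φ).Adj x y) :
    ∃ b, x ∈ (contractionHalf φ b).verts ∧ y ∈ (contractionHalf φ b).verts := by
  obtain ⟨_, u, rfl⟩ := x
  obtain ⟨_, v, rfl⟩ := y
  by_cases hσ : φ u (Fin.last d) = φ v (Fin.last d)
  · exact ⟨_, ⟨u, rfl, rfl⟩, ⟨v, hσ.symm, rfl⟩⟩
  have huv := hφ u v
  rw [hammingDist_eq_hammingDist_init_add, if_neg hσ,
    show hammingDist (Fin.init (φ u)) (Fin.init (φ v)) = 1 from hxy] at huv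
  obtain ⟨w, j, -, hj, hw⟩ := hφ.exists_adj_eq_update hconn fun h : u = v => hσ (h ▸ rfl)
  rcases j.eq_castSucc_or_eq_last with ⟨i, rfl⟩ | rfl
  · have hwu : φ w (Fin.last d) = φ u (Fin.last d) := by
      rw [hw, Function.update_of_ne (Fin.castSucc_lt_last i).ne']
    have hwv := hammingDist_update_left_of_ne hj
    rw [← hw, hammingDist_eq_hammingDist_init_add, if_neg (hwu ▸ hσ), ← hφ, huv] at hwv
    exact ⟨_, ⟨u, rfl, rfl⟩, ⟨w, hwu, hammingDist_eq_zero.mp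
      (by omega : hammingDist (Fin.init (φ w)) (Fin.init (φ v)) = 0)⟩⟩
  · have hwv : φ w (Fin.last d) = φ v (Fin.last d) := by rw [hw, Function.update_self]
    have hwu : Fin.init (φ w) = Fin.init (φ u) := by rw [hw, Fin.init_update_last]
    exact ⟨_, ⟨w, hwv, hwu⟩, ⟨v, rfl, rfl⟩⟩

theorem contractionHalf_sup (hφ : G.IsHammingIsometry φ) (hconn : G.Connected) :
    contractionHalf φ false ⊔ contractionHalf φ true = ⊤ := by
  refine Subgraph.ext ?_ (funext₂ fun x y => propext ?_)
  · refine Set.eq_univ_of_forall fun ⟨_, v, hv⟩ => ?_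
    cases hb : φ v (Fin.last d)
    · exact .inl ⟨v, hb, hv⟩
    · exact .inr ⟨v, hb, hv⟩
  rw [Subgraph.sup_adj, Subgraph.top_adj]
  refine ⟨fun h => h.elim (·.adj_sub) (·.adj_sub), fun h => ?_⟩
  obtain ⟨b, hx, hy⟩ := exists_contractionHalf_of_adj hφ hconn h
  cases b
  · exact .inl ⟨hx, hy, h⟩
  · exact .inr ⟨hx, hy, h⟩

theorem contractionHalf_inter_nonempty (hφ : G.IsHammingIsometry φ) (hconn : G.Connected)
    {u₀ v₀ : V} (h : φ u₀ (Fin.last d) ≠ φ v₀ (Fin.last d)) :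
    ((contractionHalf φ false).verts ∩ (contractionHalf φ true).verts).Nonempty := by
  obtain ⟨⟨⟨a, b⟩, hab⟩, -, ha, hb⟩ := (hconn.preconnected u₀ v₀).some.exists_boundary_dart
    {v | φ v (Fin.last d) = φ u₀ (Fin.last d)} rfl (Ne.symm h)
  have hσ : φ a (Fin.last d) ≠ φ b (Fin.last d) := fun h' => hb (h'.symm.trans ha)
  have hinit : Fin.init (φ a) = Fin.init (φ b) := by simpa [hσ] using hφ.adj_iff.mp hab
  have hmem : ∀ c, ⟨Fin.init (φ a), a, rfl⟩ ∈ (contractionHalf φ c).verts := fun c =>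
    (Bool.eq_or_eq_not c (φ a (Fin.last d))).elim (fun hc => ⟨a, hc.symm, rfl⟩)
      fun hc => ⟨b, (hc.trans (Bool.eq_not_of_ne hσ.symm).symm).symm, hinit.symm⟩
  exact ⟨_, hmem false, hmem true⟩

variable (φ) in
def toExpansion (v : V) : (contractionHalf φ false).verts ⊕ (contractionHalf φ true).verts :=
  if h : φ v (Fin.last d) = true then .inr ⟨⟨_, v, rfl⟩, v, h, rfl⟩
  else .inl ⟨⟨_, v, rfl⟩, v, Bool.eq_false_iff.mpr h, rfl⟩

theorem toExpansion_of_false {v : V} (h : φ v (Fin.last d) = false) :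
    toExpansion φ v = .inl ⟨⟨_, v, rfl⟩, v, h, rfl⟩ :=
  dif_neg (by simp [h])

theorem toExpansion_of_true {v : V} (h : φ v (Fin.last d) = true) :
    toExpansion φ v = .inr ⟨⟨_, v, rfl⟩, v, h, rfl⟩ :=
  dif_pos h

theorem toExpansion_injective (hφ : G.IsHammingIsometry φ) (hconn : G.Connected) :
    Function.Injective (toExpansion φ) := by
  intro a b hab
  apply hφ.injective hconn
  rw [← Fin.snoc_init_self (φ a), ← Fin.snoc_init_self (φ b)]
  cases ha : φ a (Fin.last d) <;> cases hb : φ b (Fin.last d) <;>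
    simp_all [toExpansion_of_false, toExpansion_of_true, Subtype.ext_iff]

theorem toExpansion_surjective : Function.Surjective (toExpansion φ) := by
  rintro (⟨⟨x, hx⟩, v, hv, hvx⟩ | ⟨⟨x, hx⟩, v, hv, hvx⟩) <;>
    obtain rfl : Fin.init (φ v) = x := hvx
  · exact ⟨v, toExpansion_of_false hv⟩
  · exact ⟨v, toExpansion_of_true hv⟩

theorem toExpansion_adj_iff (hφ : G.IsHammingIsometry φ) {a b : V} :
    (expansionGraph _ _).Adj (toExpansion φ a) (toExpansion φ b) ↔ G.Adj a b := by
  rw [hφ.adj_iff]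
  cases ha : φ a (Fin.last d) <;> cases hb : φ b (Fin.last d) <;>
    simp only [toExpansion_of_false, toExpansion_of_true, ha, hb, expansionGraph, contractionHalf,
      Subgraph.induce_adj, Subgraph.top_adj, Subtype.ext_iff, Bool.false_eq_true,
      Bool.true_eq_false, ↓reduceIte]
  all_goals exact ⟨fun h => h.2.2, fun h => ⟨⟨a, ha, rfl⟩, ⟨b, hb, rfl⟩, h⟩⟩

theorem isExpansionWrt_contraction (hφ : G.IsHammingIsometry φ) (hconn : G.Connected)
    {u₀ v₀ : V} (h : φ u₀ (Fin.last d) ≠ φ v₀ (Fin.last d)) :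
    IsExpansionWrt G (contraction φ) (contractionHalf φ false) (contractionHalf φ true) where
  isometric₁ := isIsometricSubgraph_contractionHalf hφ hconn false
  isometric₂ := isIsometricSubgraph_contractionHalf hφ hconn true
  covers := contractionHalf_sup hφ hconn
  inter_nonempty := contractionHalf_inter_nonempty hφ hconn h
  iso := ⟨⟨.ofBijective _ ⟨toExpansion_injective hφ hconn, toExpansion_surjective⟩,
    toExpansion_adj_iff hφ⟩⟩

end Contraction

theorem ObtainableByExpansions.of_isHammingIsometry :
    ∀ (d : ℕ) {V : Type} {G : SimpleGraph V} (φ : V → Fin d → Bool), G.IsHammingIsometry φ →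
      G.Connected → ObtainableByExpansions G
  | 0, _, G, φ, hφ, hconn =>
    .single G ⟨hconn.nonempty.some, fun _ => hφ.injective hconn (Subsingleton.elim _ _)⟩
  | d + 1, V, G, φ, hφ, hconn => by
    by_cases hσ : ∀ u v : V, φ u (Fin.last d) = φ v (Fin.last d)
    · refine of_isHammingIsometry d (fun v => Fin.init (φ v)) (fun u v => ?_) hconn
      rw [hφ, hammingDist_eq_hammingDist_init_add, if_pos (hσ u v), add_zero]
    obtain ⟨u₀, v₀, h⟩ : ∃ u v : V, φ u (Fin.last d) ≠ φ v (Fin.last d) := by simpa using hσ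
    obtain ⟨hpre, hval⟩ := contraction_preconnected_and_isHammingIsometry hφ hconn
    exact .expand (of_isHammingIsometry d Subtype.val hval
        ((connected_iff _).mpr ⟨hpre, ⟨⟨_, u₀, rfl⟩⟩⟩))
      ⟨_, _, isExpansionWrt_contraction hφ hconn h⟩

theorem partialCube_iff_obtainableByExpansions_general {V : Type} (G : SimpleGraph V) :
    IsPartialCube G ↔ ObtainableByExpansions G := by
  refine ⟨fun hG => ?_, ObtainableByExpansions.isPartialCube⟩
  obtain ⟨hconn, d, φ, hφ⟩ := isPartialCube_iff.mp hG
  exact .of_isHammingIsometry d φ hφ hconn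

/-- A connected simple graph `G` is a partial cube if and only if it can be
obtained from the one-vertex graph `K₁` by a finite sequence of expansions. -/
theorem partialCube_iff_obtainableByExpansions {V : Type} (G : SimpleGraph V)
    (hconn : G.Connected) :
    IsPartialCube G ↔ ObtainableByExpansions G :=
  partialCube_iff_obtainableByExpansions_general G
end

section
/- In a partial cube, every equivalence class of edges with respect to the Djoković–Winkler relation Θ is an inclusion-minimal edge cut: removing the class disconnects the graph, and no proper subset of the class disconnects the graph. -/
/-!
An isometric embedding `φ` into a hypercube sends each edge `xy` to two words differing in exactly
one coordinate `i`. Moving from `x` to `y` then changes the Hamming distance to a vertex `u` by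
`+1` or `-1` according to whether `u` agrees with `x` at `i`, so `xy Θ uv` holds exactly when `u`
and `v` differ at `i`: the `Θ`-class of `xy` is the set of edges crossing coordinate `i`.
Deleting these edges separates `x` from `y`. Conversely, a shortest path between two vertices that
agree at `i` never flips `i`, so both sides stay connected without the crossing edges, and any
crossing edge that is kept joins the two sides.
-/

open SimpleGraph

/-- The Djoković–Winkler relation `Θ` on (unordered) edges: `e = xy` and
`f = uv` are related iff `d(x,u) + d(y,v) ≠ d(x,v) + d(y,u)`. -/
def DWRel {V : Type} (G : SimpleGraph V) (e f : Sym2 V) : Prop :=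
  ∃ x y u v : V, e = s(x, y) ∧ f = s(u, v) ∧
    G.dist x u + G.dist y v ≠ G.dist x v + G.dist y u

/-- A `Θ`-class of `G`: the set of all edges of `G` related to some fixed edge
`e` of `G` by the Djoković–Winkler relation. -/
def IsThetaClass {V : Type} (G : SimpleGraph V) (C : Set (Sym2 V)) : Prop :=
  ∃ e ∈ G.edgeSet, C = {f | f ∈ G.edgeSet ∧ DWRel G e f}

open Function

section Hamming

variable {ι : Type*} [Fintype ι] [DecidableEq ι]

theorem hammingDist_update_add {β : ι → Type*} [∀ i, DecidableEq (β i)] (x z : ∀ i, β i)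
    (i : ι) (b : β i) :
    hammingDist (update x i b) z + (if x i ≠ z i then 1 else 0) =
      hammingDist x z + (if b ≠ z i then 1 else 0) := by
  simp only [hammingDist, Finset.card_filter]
  rw [← Finset.add_sum_erase _ _ (Finset.mem_univ i),
    ← Finset.add_sum_erase _ _ (Finset.mem_univ i), update_self]
  have hrest : ∀ k ∈ Finset.univ.erase i,
      (if update x i b k ≠ z k then 1 else 0) = (if x k ≠ z k then 1 else 0) := fun k hk => by
    rw [update_of_ne (Finset.ne_of_mem_erase hk)]
  rw [Finset.sum_congr rfl hrest]
  omega

theorem exists_eq_update_not_of_hammingDist_eq_one {x y : ι → Bool} (h : hammingDist x y = 1) :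
    ∃ i, y = update x i (!x i) := by
  obtain ⟨i, hi⟩ := Finset.card_eq_one.mp h
  have hdiff : ∀ k, x k ≠ y k ↔ k = i := fun k => by
    simpa using congrArg (k ∈ ·) hi
  refine ⟨i, funext fun k => ?_⟩
  rcases eq_or_ne k i with rfl | hk
  · rw [update_self, Bool.eq_not]
    exact Ne.symm ((hdiff k).2 rfl)
  · rw [update_of_ne hk]
    exact (not_not.mp (mt (hdiff k).1 hk)).symm

end Hamming

namespace hypercubeGraph

variable {d : ℕ}

theorem exists_walk_length_eq_hammingDist (x y : Fin d → Bool) :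
    ∃ p : (hypercubeGraph d).Walk x y, p.length = hammingDist x y := by
  induction hn : hammingDist x y generalizing x with
  | zero =>
    rw [hammingDist_eq_zero] at hn
    exact hn ▸ ⟨.nil, rfl⟩
  | succ n ih =>
    obtain ⟨i, hi⟩ : ∃ i, x i ≠ y i := by
      by_contra! h
      simp [funext h] at hn
    have hstep : hammingDist (update x i (y i)) x = 1 := by
      simpa [Ne.symm hi] using hammingDist_update_add x x i (y i)
    have hrest : hammingDist (update x i (y i)) y = n := by
      have := hammingDist_update_add x y i (y i)
      simp only [hi, ne_eq, not_true_eq_false, if_false, if_true, not_false_eq_true] at this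
      omega
    have hadj : (hypercubeGraph d).Adj x (update x i (y i)) := by
      show hammingDist x _ = 1
      rwa [hammingDist_comm]
    obtain ⟨p, hp⟩ := ih _ hrest
    exact ⟨.cons hadj p, by simp [hp]⟩

theorem hammingDist_le_length {x y : Fin d → Bool} (p : (hypercubeGraph d).Walk x y) :
    hammingDist x y ≤ p.length := by
  induction p with
  | nil => simp
  | @cons a b c hab p ih =>
    have : hammingDist a b = 1 := hab
    grw [Walk.length_cons, hammingDist_triangle a b c]
    omega

theorem dist_eq_hammingDist (x y : Fin d → Bool) :
    (hypercubeGraph d).dist x y = hammingDist x y := by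
  obtain ⟨p, hp⟩ := exists_walk_length_eq_hammingDist x y
  obtain ⟨q, hq⟩ := Reachable.exists_walk_length_eq_dist ⟨p⟩
  exact le_antisymm (hp ▸ dist_le p) (hq ▸ hammingDist_le_length q)

end hypercubeGraph

namespace SimpleGraph

section General

variable {V : Type*} {G : SimpleGraph V}

theorem Reachable.exists_adj_dist_lt {u v : V} (h : G.Reachable u v) (hne : u ≠ v) :
    ∃ w, G.Adj u w ∧ G.dist w v < G.dist u v := by
  obtain ⟨p, hp⟩ := h.exists_walk_length_eq_dist
  cases p with
  | nil => exact absurd rfl hne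
  | cons hadj q =>
    refine ⟨_, hadj, ?_⟩
    have := dist_le q
    rw [Walk.length_cons] at hp
    omega

variable {ι : Type*} {φ : V → ι → Bool} {i : ι}

def crossingEdges (G : SimpleGraph V) (φ : V → ι → Bool) (i : ι) : Set (Sym2 V) :=
  {e ∈ G.edgeSet | ¬(e.map (φ · i)).IsDiag}

@[simp]
theorem mk_mem_crossingEdges {a b : V} :
    s(a, b) ∈ G.crossingEdges φ i ↔ G.Adj a b ∧ φ a i ≠ φ b i := by
  simp [crossingEdges]

theorem not_connected_deleteEdges_crossingEdges {x y : V} (h : φ x i ≠ φ y i) :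
    ¬(G.deleteEdges (G.crossingEdges φ i)).Connected := by
  intro hconn
  obtain ⟨p⟩ := hconn.preconnected x y
  obtain ⟨d, -, hfst, hsnd⟩ := p.exists_boundary_dart {a | φ a i = φ x i} rfl (Ne.symm h)
  have hadj := (deleteEdges_adj ..).1 d.adj
  exact hadj.2 (mk_mem_crossingEdges.2 ⟨hadj.1, fun h' => hsnd (h'.symm.trans hfst)⟩)

variable [Fintype ι] [DecidableEq ι]

theorem exists_eq_update_not_of_adj (hφ : ∀ v w, hammingDist (φ v) (φ w) = G.dist v w)
    {a b : V} (h : G.Adj a b) : ∃ i, φ b = update (φ a) i (!φ a i) :=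
  exists_eq_update_not_of_hammingDist_eq_one (by rw [hφ, dist_eq_one_iff_adj.2 h])

theorem reachable_deleteEdges_crossingEdges (hφ : ∀ v w, hammingDist (φ v) (φ w) = G.dist v w)
    (hG : G.Connected) {w z : V} (h : φ w i = φ z i) :
    (G.deleteEdges (G.crossingEdges φ i)).Reachable w z := by
  induction hn : G.dist w z using Nat.strong_induction_on generalizing w with
  | _ n ih =>
  rcases eq_or_ne w z with rfl | hne
  · rfl
  obtain ⟨w', hadj, hlt⟩ := (hG.preconnected w z).exists_adj_dist_lt hne
  obtain ⟨j, hj⟩ := exists_eq_update_not_of_adj hφ hadj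
  -- flipping coordinate `i` would move `w'` away from `z`
  have hji : j ≠ i := by
    rintro rfl
    have := hammingDist_update_add (φ w) (φ z) j (!φ w j)
    rw [← hj, hφ, hφ] at this
    simp only [h, ne_eq, not_true_eq_false, ↓reduceIte, add_zero, Bool.not_eq_eq_eq_not,
      Bool.eq_not_self, not_false_eq_true] at this
    omega
  have hw' : φ w' i = φ w i := by rw [hj, update_of_ne hji.symm]
  have hstep : (G.deleteEdges (G.crossingEdges φ i)).Adj w w' :=
    (deleteEdges_adj ..).2 ⟨hadj, fun hcross => (mk_mem_crossingEdges.1 hcross).2 hw'.symm⟩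
  exact hstep.reachable.trans (ih _ (hn ▸ hlt) (hw'.trans h) rfl)

theorem connected_deleteEdges_of_ssubset_crossingEdges
    (hφ : ∀ v w, hammingDist (φ v) (φ w) = G.dist v w) (hG : G.Connected) {C : Set (Sym2 V)}
    (hC : C ⊂ G.crossingEdges φ i) : (G.deleteEdges C).Connected := by
  obtain ⟨f, hf, hfC⟩ := Set.exists_of_ssubset hC
  induction f using Sym2.ind with | _ u v =>
  obtain ⟨huv, hi⟩ := mk_mem_crossingEdges.1 hf
  have hreach {a b : V} (h : φ a i = φ b i) : (G.deleteEdges C).Reachable a b :=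
    (reachable_deleteEdges_crossingEdges hφ hG h).mono (deleteEdges_anti hC.subset)
  have hu (a : V) : (G.deleteEdges C).Reachable a u := by
    by_cases ha : φ a i = φ u i
    · exact hreach ha
    · have hav : φ a i = φ v i := (Bool.eq_not.2 ha).trans (Bool.eq_not.2 hi.symm).symm
      exact (hreach hav).trans ((deleteEdges_adj ..).2 ⟨huv, hfC⟩).reachable.symm
  have := hG.nonempty
  exact ⟨fun a b => (hu a).trans (hu b).symm⟩

theorem dist_add_dist_ne_iff (hφ : ∀ v w, hammingDist (φ v) (φ w) = G.dist v w) {x y : V}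
    (hxy : φ y = update (φ x) i (!φ x i)) (u v : V) :
    G.dist x u + G.dist y v ≠ G.dist x v + G.dist y u ↔ φ u i ≠ φ v i := by
  have hu := hammingDist_update_add (φ x) (φ u) i (!φ x i)
  have hv := hammingDist_update_add (φ x) (φ v) i (!φ x i)
  rw [← hxy, hφ, hφ] at hu hv
  generalize φ x i = a at hu hv
  generalize φ u i = b at hu hv ⊢
  generalize φ v i = c at hv ⊢
  cases a <;> cases b <;> cases c <;> simp at hu hv ⊢ <;> omega

end General

section ThetaClass

variable {V : Type} {G : SimpleGraph V} {ι : Type*} [Fintype ι] [DecidableEq ι] {φ : V → ι → Bool}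
  {i : ι}

theorem dwRel_mk_iff (hφ : ∀ v w, hammingDist (φ v) (φ w) = G.dist v w) {x y : V}
    (hxy : φ y = update (φ x) i (!φ x i)) (u v : V) :
    DWRel G s(x, y) s(u, v) ↔ φ u i ≠ φ v i := by
  refine ⟨?_, fun h => ⟨x, y, u, v, rfl, rfl, (dist_add_dist_ne_iff hφ hxy u v).2 h⟩⟩
  rintro ⟨x', y', u', v', he, hf, hne⟩
  have key := dist_add_dist_ne_iff hφ hxy u' v'
  rcases Sym2.eq_iff.1 he with ⟨rfl, rfl⟩ | ⟨rfl, rfl⟩ <;>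
    rcases Sym2.eq_iff.1 hf with ⟨rfl, rfl⟩ | ⟨rfl, rfl⟩
  all_goals first | exact key.1 (by omega) | exact (key.1 (by omega)).symm

theorem setOf_dwRel_eq_crossingEdges (hφ : ∀ v w, hammingDist (φ v) (φ w) = G.dist v w)
    {x y : V} (hxy : φ y = update (φ x) i (!φ x i)) :
    {f | f ∈ G.edgeSet ∧ DWRel G s(x, y) f} = G.crossingEdges φ i := by
  ext f
  induction f using Sym2.ind with | _ u v =>
  simp [dwRel_mk_iff hφ hxy]

end ThetaClass

end SimpleGraph

/-- In a partial cube, every `Θ`-class is an inclusion-minimal edge cut: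
removing it disconnects the graph, but removing any proper subset of it does
not. -/
theorem thetaClass_minimal_edge_cut {V : Type} (H : SimpleGraph V)
    (hH : IsPartialCube H) (C : Set (Sym2 V)) (hC : IsThetaClass H C) :
    ¬ (H.deleteEdges C).Connected ∧
    ∀ C' ⊂ C, (H.deleteEdges C').Connected := by
  obtain ⟨hconn, d, φ, -, hφ⟩ := hH
  simp only [hypercubeGraph.dist_eq_hammingDist] at hφ
  obtain ⟨e, he, rfl⟩ := hC
  induction e using Sym2.ind with | _ x y =>
  obtain ⟨i, hxy⟩ := exists_eq_update_not_of_adj hφ he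
  rw [setOf_dwRel_eq_crossingEdges hφ hxy]
  refine ⟨not_connected_deleteEdges_crossingEdges (x := x) (y := y) ?_,
    fun C' hC' => connected_deleteEdges_of_ssubset_crossingEdges hφ hconn hC'⟩
  simp [hxy]
end
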